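/- Let q be a prime power, and let n, k, d be positive integers with 1 ≤ k ≤ n. If q^{2n−k} − 1 < q^{2n} / ∑_{i=0}^{d−1} C(n,i)(q²−1)^i, then there exists a k-dimensional linear subspace C ⊆ 𝔽_q^{2n} that is symplectic self-orthogonal (C ⊆ C^{⊥_S}) and such that every nonzero vector of C^{⊥_S} has symplectic weight at least d, i.e., d_S(C^{⊥_S}) ≥ d. -/

import Mathlib

/-!
Transvections `x ↦ x + c ⟪x, u⟫ u` are symplectic, and at most two of them move any nonzero
vector to any other, so the symplectic group acts transitively on nonzero vectors. Fix an
isotropic `k`-dimensional subspace `W` and move it by a uniformly random symplectic isometry `g`: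
then `(g W)^⊥ = g (W^⊥)`, and for nonzero `y ∈ W^⊥` and nonzero `x` of symplectic weight `< d`
the event `g y = x` has probability `1 / (q^{2n} - 1)`. There are `(q^{2n-k} - 1) (V - 1)` such
pairs, `V` being the volume of the Hamming ball of radius `d - 1` in `(F × F)^n`, and the
hypothesis keeps the union bound over them below `1`.
-/

open Finset
open scoped Classical

/-- Symplectic weight of a vector in `F^{2n}`, written as `Fin n → F × F`. -/
noncomputable def sympWt {F : Type} [Zero F] [DecidableEq F] {n : ℕ} (u : Fin n → F × F) : ℕ :=
  hammingNorm u

/-- The symplectic inner product on `F^{2n}`: `⟨(a|b),(a'|b')⟩_S = ⟨a,b'⟩ - ⟨b,a'⟩`. -/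
def sympInner {F : Type} [Field F] {n : ℕ} (u v : Fin n → F × F) : F :=
  ∑ i, ((u i).1 * (v i).2 - (u i).2 * (v i).1)

theorem Submodule.exists_le_finrank_eq {K V : Type*} [DivisionRing K] [AddCommGroup V]
    [Module K V] (L : Submodule K V) {k : ℕ} (hk : k ≤ Module.finrank K L) :
    ∃ W ≤ L, Module.finrank K W = k := by
  obtain ⟨f, hf⟩ := exists_linearIndependent_of_le_finrank hk
  refine ⟨span K (Set.range (L.subtype ∘ f)), span_le.mpr ?_, ?_⟩
  · rintro _ ⟨i, rfl⟩
    exact (f i).2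
  · rw [finrank_span_eq_card (hf.map' _ L.ker_subtype), Fintype.card_fin]

namespace MulAction

variable {G α : Type*} [Group G] [MulAction G α]

theorem natCard_smul_eq_mul_ncard_orbit {x y : α} (hx : x ∈ orbit G y) :
    Nat.card {g : G // g • y = x} * (orbit G y).ncard = Nat.card G := by
  obtain ⟨h, rfl⟩ := hx
  let e : {g : G // g • y = h • y} ≃ stabilizer G y :=
    { toFun g := ⟨h⁻¹ * g, by simp [mul_smul, g.2]⟩
      invFun s := ⟨h * s, by simp [mul_smul, (mem_stabilizer_iff.mp s.2 : (s : G) • y = y)]⟩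
      left_inv g := by simp
      right_inv s := by simp }
  rw [Nat.card_congr e, ← index_stabilizer, Subgroup.card_mul_index]

theorem exists_forall_smul_notMem [Finite G] (N : Finset α)
    (hN : ∀ x ∈ N, ∀ y ∈ N, ∃ g : G, g • y = x) {s t : Finset α} (hs : s ⊆ N) (ht : t ⊆ N)
    (hcard : #s * #t < #N) : ∃ g : G, ∀ y ∈ s, g • y ∉ t := by
  classical
  have := Fintype.ofFinite G
  by_contra! hbad
  have hfiber : ∀ p ∈ s ×ˢ t, #{g : G | g • p.1 = p.2} * #N ≤ Nat.card G := by
    rintro ⟨y, x⟩ hp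
    obtain ⟨hy, hx⟩ := mem_product.mp hp
    have hNorbit : (N : Set α) ⊆ orbit G y := fun z hz => hN z hz y (hs hy)
    calc #{g : G | g • y = x} * #N
        = Nat.card {g : G // g • y = x} * (N : Set α).ncard := by
          rw [Set.ncard_coe_finset, Nat.card_eq_fintype_card, Fintype.card_subtype]
      _ ≤ Nat.card {g : G // g • y = x} * (orbit G y).ncard :=
          Nat.mul_le_mul_left _ (Set.ncard_le_ncard hNorbit (Set.finite_range fun g : G => g • y))
      _ = Nat.card G := natCard_smul_eq_mul_ncard_orbit (hNorbit (ht hx))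
  have hcover : (univ : Finset G) ⊆ (s ×ˢ t).biUnion fun p => {g : G | g • p.1 = p.2} := by
    intro g _
    obtain ⟨y, hy, hgy⟩ := hbad g
    exact mem_biUnion.mpr ⟨(y, g • y), mem_product.mpr ⟨hy, hgy⟩, by simp⟩
  have hpos : 0 < Nat.card G := Nat.card_pos
  have : Nat.card G * #N ≤ #s * #t * Nat.card G :=
    calc Nat.card G * #N
        ≤ (∑ p ∈ s ×ˢ t, #{g : G | g • p.1 = p.2}) * #N := by
          rw [Nat.card_eq_fintype_card, ← card_univ]
          exact Nat.mul_le_mul_right _ ((card_le_card hcover).trans card_biUnion_le)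
      _ ≤ ∑ _p ∈ s ×ˢ t, Nat.card G := by rw [sum_mul]; exact sum_le_sum hfiber
      _ = #s * #t * Nat.card G := by rw [sum_const, card_product, smul_eq_mul]
  nlinarith

end MulAction

namespace LinearMap.BilinForm

variable {K V : Type*} [Field K] [AddCommGroup V] [Module K V] (B : LinearMap.BilinForm K V)

def isometryGroup : Subgroup (V ≃ₗ[K] V) where
  carrier := {g | ∀ x y, B (g x) (g y) = B x y}
  one_mem' _ _ := rfl
  mul_mem' {g h} hg hh x y := (hg (h x) (h y)).trans (hh x y)
  inv_mem' {g} hg x y := by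
    rw [← hg, ← LinearEquiv.mul_apply, ← LinearEquiv.mul_apply, mul_inv_cancel]
    rfl

variable {B}

instance [Finite V] : Finite B.isometryGroup :=
  Finite.of_injective (fun g : B.isometryGroup => ((g : V ≃ₗ[K] V) : V → V))
    fun _ _ h => Subtype.ext (LinearEquiv.ext (congrFun h))

theorem transvection_mem_isometryGroup (hB : B.IsAlt) (u : V) (c : K) :
    LinearEquiv.transvection (f := (c • B.flip u : Module.Dual K V)) (v := u)
      (by simp [hB.self_eq_zero]) ∈ B.isometryGroup := by
  intro x y
  simp only [LinearEquiv.transvection.coe_apply, LinearMap.transvection.apply, map_add, map_smul,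
    LinearMap.add_apply, LinearMap.smul_apply, flip_apply, smul_eq_mul, hB.self_eq_zero,
    ← hB.neg_eq u]
  ring

theorem exists_isometry_apply_eq_of_apply_ne_zero (hB : B.IsAlt) {x y : V} (hyx : B y x ≠ 0) :
    ∃ g : B.isometryGroup, g • y = x := by
  refine ⟨⟨_, transvection_mem_isometryGroup hB (x - y) (B y x)⁻¹⟩, ?_⟩
  show y + ((B y x)⁻¹ * B y (x - y)) • (x - y) = x
  rw [map_sub, hB.self_eq_zero, sub_zero, inv_mul_cancel₀ hyx, one_smul, add_sub_cancel]

theorem exists_isometry_apply_eq (hB : B.IsAlt) (hsep : B.SeparatingLeft) {x y : V}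
    (hx : x ≠ 0) (hy : y ≠ 0) : ∃ g : B.isometryGroup, g • y = x := by
  have pairing : ∀ {v : V}, v ≠ 0 → ∃ w, B v w ≠ 0 := fun hv => by
    by_contra! h; exact hv (hsep _ h)
  obtain ⟨a, hya⟩ := pairing hy
  obtain ⟨b, hxb⟩ := pairing hx
  have hbx : B b x ≠ 0 := by rwa [← hB.neg_eq, neg_ne_zero]
  obtain ⟨z, hyz, hzx⟩ : ∃ z, B y z ≠ 0 ∧ B z x ≠ 0 := by
    by_cases hax : B a x = 0
    · by_cases hyb : B y b = 0
      · exact ⟨a + b, by simpa [hyb], by simpa [hax]⟩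
      · exact ⟨b, hyb, hbx⟩
    · exact ⟨a, hya, hax⟩
  obtain ⟨g, hg⟩ := exists_isometry_apply_eq_of_apply_ne_zero hB hyz
  obtain ⟨h, hh⟩ := exists_isometry_apply_eq_of_apply_ne_zero hB hzx
  exact ⟨h * g, by rw [mul_smul, hg, hh]⟩

theorem orthogonal_map_isometry (g : B.isometryGroup) (W : Submodule K V) :
    B.orthogonal (W.map (g.val : V →ₗ[K] V)) =
      (B.orthogonal W).map (g.val : V →ₗ[K] V) := by
  ext x
  rw [Submodule.mem_map_equiv]
  simp only [mem_orthogonal_iff, Submodule.mem_map, forall_exists_index, and_imp,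
    forall_apply_eq_imp_iff₂]
  refine forall₂_congr fun w _ => ?_
  rw [← g.2 w, LinearEquiv.coe_coe, LinearEquiv.apply_symm_apply]

theorem exists_isotropic_orthogonal_disjoint [Fintype V] (hB : B.IsAlt)
    (hsep : B.SeparatingLeft) {W : Submodule K V} (hW : ∀ x ∈ W, ∀ y ∈ W, B x y = 0)
    (S : Finset V) (hS : 0 ∉ S)
    (hcard : (Nat.card (B.orthogonal W) - 1) * #S < Nat.card V - 1) :
    ∃ C : Submodule K V, Module.finrank K C = Module.finrank K W ∧
      (∀ x ∈ C, ∀ y ∈ C, B x y = 0) ∧ ∀ x ∈ B.orthogonal C, x ∉ S := by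
  classical
  let D : Finset V := ({x | x ∈ B.orthogonal W} : Finset V).erase 0
  have hDcard : #D = Nat.card (B.orthogonal W) - 1 := by
    rw [card_erase_of_mem (by simp), Nat.card_eq_fintype_card, Fintype.card_subtype]
  obtain ⟨g, hg⟩ := MulAction.exists_forall_smul_notMem (G := B.isometryGroup) (univ.erase 0)
    (fun x hx y hy => exists_isometry_apply_eq hB hsep (ne_of_mem_erase hx) (ne_of_mem_erase hy))
    (s := D) (erase_subset_erase _ (subset_univ _))
    (fun x hx => mem_erase.mpr ⟨ne_of_mem_of_not_mem hx hS, mem_univ x⟩)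
    (by rwa [hDcard, card_erase_of_mem (mem_univ _), card_univ, ← Nat.card_eq_fintype_card])
  refine ⟨W.map (g.val : V →ₗ[K] V), LinearEquiv.finrank_map_eq _ _, ?_, ?_⟩
  · rintro _ ⟨u, hu, rfl⟩ _ ⟨v, hv, rfl⟩
    exact (g.2 u v).trans (hW u hu v hv)
  · intro x hx hxS
    rw [orthogonal_map_isometry, Submodule.mem_map_equiv] at hx
    have hx0 : x ≠ 0 := ne_of_mem_of_not_mem hxS hS
    refine hg (g.val.symm x) (mem_erase.mpr ⟨by simpa using hx0, by simpa using hx⟩) ?_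
    simpa [Subgroup.smul_def] using hxS

end LinearMap.BilinForm

section Hamming

variable {ι A : Type*} [Fintype ι] [DecidableEq ι] [Fintype A] [DecidableEq A] [Zero A]

theorem card_support_eq (s : Finset ι) :
    #{x : ι → A | ({j | x j ≠ 0} : Finset ι) = s} = (Fintype.card A - 1) ^ #s := by
  have : ({x : ι → A | ({j | x j ≠ 0} : Finset ι) = s} : Finset _) =
      Fintype.piFinset fun j => if j ∈ s then univ.erase 0 else {0} := by
    ext x
    simp only [mem_filter, mem_univ, true_and, Fintype.mem_piFinset, Finset.ext_iff]
    refine forall_congr' fun j => ?_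
    split_ifs with hj <;> simp [hj]
  simp [this, Fintype.card_piFinset, apply_ite card, prod_ite_mem]

theorem card_hammingNorm_eq (i : ℕ) :
    #{x : ι → A | hammingNorm x = i} =
      (Fintype.card ι).choose i * (Fintype.card A - 1) ^ i := by
  rw [card_eq_sum_card_fiberwise (f := fun x : ι → A => ({j | x j ≠ 0} : Finset ι))
    (t := powersetCard i univ) (fun x hx => by simpa [hammingNorm] using hx),
    ← card_univ, ← card_powersetCard, ← smul_eq_mul, ← sum_const]
  refine sum_congr rfl fun s hs => ?_
  rw [← (mem_powersetCard.mp hs).2, ← card_support_eq, filter_filter]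
  congr 1
  exact filter_congr fun x _ => ⟨And.right, fun h => ⟨by rw [← h]; rfl, h⟩⟩

theorem card_hammingNorm_lt (d : ℕ) :
    #{x : ι → A | hammingNorm x < d} =
      ∑ i ∈ range d, (Fintype.card ι).choose i * (Fintype.card A - 1) ^ i := by
  rw [card_eq_sum_card_fiberwise (f := hammingNorm) (t := range d) (fun x hx => by simpa using hx)]
  refine sum_congr rfl fun i hi => ?_
  rw [← card_hammingNorm_eq, filter_filter]
  congr 1
  exact filter_congr fun x _ => ⟨And.right, by rintro rfl; exact ⟨mem_range.mp hi, rfl⟩⟩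

end Hamming

section Symplectic

variable (F : Type) [Field F] (n : ℕ)

def sympForm : LinearMap.BilinForm F (Fin n → F × F) :=
  LinearMap.mk₂ F sympInner
    (fun _ _ _ => by simp only [sympInner, ← sum_add_distrib]; congr! 1; simp; ring)
    (fun _ _ _ => by simp only [sympInner, smul_eq_mul, mul_sum]; congr! 1; simp; ring)
    (fun _ _ _ => by simp only [sympInner, ← sum_add_distrib]; congr! 1; simp; ring)
    (fun _ _ _ => by simp only [sympInner, smul_eq_mul, mul_sum]; congr! 1; simp; ring)

variable {F n}

@[simp]
theorem sympForm_apply (u v : Fin n → F × F) : sympForm F n u v = sympInner u v :=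
  rfl

theorem sympForm_isAlt : (sympForm F n).IsAlt := fun u => by
  simp [sympInner, mul_comm]

theorem sympInner_single_right (u : Fin n → F × F) (i : Fin n) (p : F × F) :
    sympInner u (Pi.single i p) = (u i).1 * p.2 - (u i).2 * p.1 := by
  rw [sympInner, Fintype.sum_eq_single i fun j hj => by simp [Pi.single_eq_of_ne hj]]
  simp

theorem sympForm_separatingLeft : (sympForm F n).SeparatingLeft := fun u hu => by
  funext i
  have h1 := hu (Pi.single i (0, 1))
  have h2 := hu (Pi.single i (1, 0))
  simp only [sympForm_apply, sympInner_single_right] at h1 h2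
  ext <;> simp_all

theorem finrank_fin_fun_prod : Module.finrank F (Fin n → F × F) = 2 * n := by
  simp [Module.finrank_pi_fintype, Module.finrank_prod, mul_comm]

theorem exists_sympIsotropic_finrank_eq {k : ℕ} (hkn : k ≤ n) :
    ∃ W : Submodule F (Fin n → F × F), Module.finrank F W = k ∧
      ∀ x ∈ W, ∀ y ∈ W, sympInner x y = 0 := by
  let L := LinearMap.range (LinearMap.compLeft (LinearMap.inl F F F) (Fin n))
  have hL : Module.finrank F L = n := by
    rw [LinearMap.finrank_range_of_inj, Module.finrank_fin_fun]
    exact fun a b h => funext fun i => (Prod.ext_iff.mp (congrFun h i)).1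
  obtain ⟨W, hWL, hW⟩ := L.exists_le_finrank_eq (hL ▸ hkn)
  refine ⟨W, hW, fun x hx y hy => ?_⟩
  obtain ⟨a, rfl⟩ := hWL hx
  obtain ⟨b, rfl⟩ := hWL hy
  simp [sympInner]

end Symplectic

theorem quantum_gv_count_lt {q n k d : ℕ} (hq : 2 ≤ q) (hn : 0 < n) (hkn : k ≤ n) (hd : 0 < d)
    (hineq : (q : ℝ) ^ (2 * n - k) - 1 <
      (q : ℝ) ^ (2 * n) / ∑ i ∈ range d, (n.choose i : ℝ) * ((q : ℝ) ^ 2 - 1) ^ i) :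
    (q ^ (2 * n - k) - 1) * (∑ i ∈ range d, n.choose i * (q ^ 2 - 1) ^ i - 1) <
      q ^ (2 * n) - 1 := by
  set S := ∑ i ∈ range d, n.choose i * (q ^ 2 - 1) ^ i
  have hS : 1 ≤ S :=
    calc 1 = n.choose 0 * (q ^ 2 - 1) ^ 0 := by simp
      _ ≤ S := single_le_sum (f := fun i => n.choose i * (q ^ 2 - 1) ^ i)
          (fun _ _ => Nat.zero_le _) (mem_range.mpr hd)
  have hSR : (S : ℝ) = ∑ i ∈ range d, (n.choose i : ℝ) * ((q : ℝ) ^ 2 - 1) ^ i := by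
    push_cast [S, Nat.cast_sub (Nat.one_le_pow 2 q (by omega))]
    rfl
  have ha : 2 ≤ q ^ (2 * n - k) := hq.trans (Nat.le_self_pow (by omega) q)
  have hlt : (q ^ (2 * n - k) - 1) * S < q ^ (2 * n) := by
    rw [← hSR] at hineq
    have := (lt_div_iff₀ (by exact_mod_cast hS : (0 : ℝ) < S)).mp hineq
    have : (((q ^ (2 * n - k) - 1) * S : ℕ) : ℝ) < (q ^ (2 * n) : ℕ) := by
      push_cast [Nat.cast_sub (by omega : 1 ≤ q ^ (2 * n - k))]
      exact this
    exact_mod_cast this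
  have := Nat.le_mul_of_pos_right (q ^ (2 * n - k) - 1) hS
  rw [Nat.mul_sub_one]
  omega

theorem quantum_gv_bound_basic_general
    (q : ℕ) (F : Type) [Field F] [Fintype F] [DecidableEq F] (hF : Fintype.card F = q)
    (n k d : ℕ) (hn : 0 < n) (hd : 0 < d) (hkn : k ≤ n)
    (hineq : (q : ℝ) ^ (2 * n - k) - 1 <
      (q : ℝ) ^ (2 * n) /
        (∑ i ∈ Finset.range d, (n.choose i : ℝ) * ((q : ℝ) ^ 2 - 1) ^ i)) :
    ∃ C : Submodule F (Fin n → F × F), Module.finrank F C = k ∧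
      (∀ x ∈ C, ∀ y ∈ C, sympInner x y = 0) ∧
      ∀ x : Fin n → F × F, (∀ c ∈ C, sympInner x c = 0) → x ≠ 0 → d ≤ sympWt x := by
  have hq : 2 ≤ q := hF ▸ Fintype.one_lt_card
  have hB : (sympForm F n).IsAlt := sympForm_isAlt
  obtain ⟨W, hWk, hW⟩ := exists_sympIsotropic_finrank_eq (F := F) hkn
  have hcardV : Nat.card (Fin n → F × F) = q ^ (2 * n) := by
    rw [Module.natCard_eq_pow_finrank (K := F), finrank_fin_fun_prod, Nat.card_eq_fintype_card, hF]
  have hcardW : Nat.card ((sympForm F n).orthogonal W) = q ^ (2 * n - k) := by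
    rw [Module.natCard_eq_pow_finrank (K := F), Nat.card_eq_fintype_card, hF,
      LinearMap.BilinForm.finrank_orthogonal
        (LinearMap.BilinForm.Nondegenerate.ofSeparatingLeft sympForm_separatingLeft),
      finrank_fin_fun_prod, hWk]
  have hcardS : #(({x | sympWt x < d} : Finset (Fin n → F × F)).erase 0) =
      ∑ i ∈ range d, n.choose i * (q ^ 2 - 1) ^ i - 1 := by
    rw [card_erase_of_mem (mem_filter.mpr ⟨mem_univ _, by simpa [sympWt] using hd⟩)]
    unfold sympWt
    rw [card_hammingNorm_lt, Fintype.card_fin, Fintype.card_prod, hF, sq]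
  obtain ⟨C, hCk, hCiso, hCdual⟩ := (sympForm F n).exists_isotropic_orthogonal_disjoint hB
    sympForm_separatingLeft hW _ (notMem_erase 0 _)
    (by rw [hcardW, hcardV, hcardS]; exact quantum_gv_count_lt hq hn hkn hd hineq)
  refine ⟨C, hCk.trans hWk, hCiso, fun x hx hx0 => ?_⟩
  by_contra! hlt
  exact hCdual x (fun c hc => hB.eq_iff.mp (hx c hc)) (mem_erase.mpr ⟨hx0, by simpa using hlt⟩)

/-- Let `q` be a prime power (realized as the cardinality of a finite field
`F`) and `n, k, d` positive integers with `1 ≤ k ≤ n`. If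
`q^{2n-k} - 1 < q^{2n} / ∑_{i=0}^{d-1} C(n,i)(q²-1)^i`, then there exists a `k`-dimensional
symplectic self-orthogonal subspace `C` of `F^{2n}` such that every nonzero vector of the
symplectic dual `C^{⊥_S}` has symplectic weight at least `d`. -/
theorem quantum_gv_bound_basic
    (q : ℕ) (F : Type) [Field F] [Fintype F] [DecidableEq F] (hF : Fintype.card F = q)
    (n k d : ℕ) (hn : 0 < n) (hd : 0 < d) (hk1 : 1 ≤ k) (hkn : k ≤ n)
    (hineq : (q : ℝ) ^ (2 * n - k) - 1 <
      (q : ℝ) ^ (2 * n) /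
        (∑ i ∈ Finset.range d, (n.choose i : ℝ) * ((q : ℝ) ^ 2 - 1) ^ i)) :
    ∃ C : Submodule F (Fin n → F × F), Module.finrank F C = k ∧
      (∀ x ∈ C, ∀ y ∈ C, sympInner x y = 0) ∧
      ∀ x : Fin n → F × F, (∀ c ∈ C, sympInner x c = 0) → x ≠ 0 → d ≤ sympWt x :=
  quantum_gv_bound_basic_general q F hF n k d hn hd hkn hineq
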